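/- Let G be a multiplicative cyclic group of order m = p·q, where p and q are distinct primes, and let P and Q be the unique subgroups of G of orders p and q respectively. Then ℕG ∩ ker φ = ℕ[P]·σ(Q) + ℕ[Q]·σ(P), where ℕ[P] denotes the set of elements of ℤG supported on P with non-negative coefficients (and similarly ℕ[Q]). -/

import Mathlib

/-!
Since `|P|` and `|Q|` are coprime, `G = P × Q`, so `x = ∑ c(a, b) ab` and, with the injective
character `χ = φ ∘ of`, `φ x = ∑_b (∑_a c(a, b) χ(a)) χ(b)`. The fields `ℚ(χ P)` and `ℚ(χ Q)` are
linearly disjoint: their compositum contains a primitive `pq`-th root of unity, so its degree is at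
least `(p - 1)(q - 1)`, the product of their degrees. Hence the powers `χ(b₀)^j`, `j < q - 1`, of
a generator stay linearly independent over `ℚ(χ P)`; together with `∑_j χ(b₀)^j = 0` this forces
the inner sums to be independent of `b`, and the same argument over `ℚ` then gives
`c(a, b) = f(a) + g(b)`. Shifting by `min g` makes `f, g ≥ 0`, and then
`x = (∑ f(a) a) σ(Q) + (∑ g(b) b) σ(P)`.
-/

noncomputable section

/-- `σ(H) = ∑_{h ∈ H} h` in the integral group ring, for a finite subset `H ⊆ G`. -/
def grpSum {G : Type*} [CommGroup G] (s : Set G) (hs : s.Finite) : MonoidAlgebra ℤ G :=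
  ∑ h ∈ hs.toFinset, MonoidAlgebra.of ℤ G h

open Polynomial IntermediateField Finset MonoidAlgebra

namespace IsPrimitiveRoot

section CharZero

variable {E : Type*} [Field E] [CharZero E]

theorem natDegree_minpoly_rat {μ : E} {n : ℕ} (hμ : IsPrimitiveRoot μ n) (hn : 0 < n) :
    (minpoly ℚ μ).natDegree = n.totient := by
  rw [← cyclotomic_eq_minpoly_rat hμ hn, natDegree_cyclotomic]

theorem finrank_adjoin_rat {μ : E} {n : ℕ} (hμ : IsPrimitiveRoot μ n) (hn : 0 < n) :
    Module.finrank ℚ ℚ⟮μ⟯ = n.totient :=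
  (adjoin.finrank (hμ.isIntegral hn).tower_top).trans (hμ.natDegree_minpoly_rat hn)

theorem linearIndependent_pow_rat {μ : E} {n : ℕ} (hμ : IsPrimitiveRoot μ n) (hn : 0 < n) :
    LinearIndependent ℚ fun j : Fin n.totient => μ ^ (j : ℕ) := by
  have := linearIndependent_pow (K := ℚ) μ
  rwa [hμ.natDegree_minpoly_rat hn] at this

theorem linearDisjoint_adjoin_rat {x y : E} {m n : ℕ} (hx : IsPrimitiveRoot x m)
    (hy : IsPrimitiveRoot y n) (hm : 0 < m) (hn : 0 < n) (hmn : m.Coprime n) :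
    ℚ⟮x⟯.LinearDisjoint ℚ⟮y⟯ := by
  have := adjoin.finiteDimensional (hx.isIntegral hm).tower_top (K := ℚ)
  have := adjoin.finiteDimensional (hy.isIntegral hn).tower_top (K := ℚ)
  refine LinearDisjoint.of_finrank_sup ((finrank_sup_le _ _).antisymm ?_)
  have hx' : IsPrimitiveRoot (⟨x, le_sup_left (b := ℚ⟮y⟯) (mem_adjoin_simple_self ℚ x)⟩ :
      ↥(ℚ⟮x⟯ ⊔ ℚ⟮y⟯)) m := coe_submonoidClass_iff.mp hx
  have hy' : IsPrimitiveRoot (⟨y, le_sup_right (a := ℚ⟮x⟯) (mem_adjoin_simple_self ℚ y)⟩ :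
      ↥(ℚ⟮x⟯ ⊔ ℚ⟮y⟯)) n := coe_submonoidClass_iff.mp hy
  have := hx'.lcm_totient_le_finrank hy' (cyclotomic.irreducible_rat (Nat.lcm_pos hm hn))
  rwa [hmn.lcm_eq_mul, Nat.totient_mul hmn, ← hx.finrank_adjoin_rat hm,
    ← hy.finrank_adjoin_rat hn] at this

theorem linearIndependent_pow_adjoin {x y : E} {m n : ℕ} (hx : IsPrimitiveRoot x m)
    (hy : IsPrimitiveRoot y n) (hm : 0 < m) (hn : 0 < n) (hmn : m.Coprime n) :
    LinearIndependent ℚ⟮x⟯ fun j : Fin n.totient => y ^ (j : ℕ) := by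
  have hgen : IsPrimitiveRoot (AdjoinSimple.gen ℚ y) n := coe_submonoidClass_iff.mp hy
  convert (hx.linearDisjoint_adjoin_rat hy hm hn hmn).linearIndependent_right
    (hgen.linearIndependent_pow_rat hn) using 1
  ext j
  simp

end CharZero

theorem coeff_eq_of_sum_smul_pow_eq_zero {K E : Type*} [Field K] [Field E] [Algebra K E] {μ : E}
    {n : ℕ} (hμ : IsPrimitiveRoot μ n) (hn : 1 < n)
    (hli : LinearIndependent K fun j : Fin (n - 1) => μ ^ (j : ℕ)) {a : ℕ → K}
    (ha : ∑ j ∈ range n, a j • μ ^ j = 0) {j : ℕ} (hj : j < n) : a j = a 0 := by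
  obtain ⟨m, rfl⟩ : ∃ m, n = m + 1 := ⟨n - 1, by omega⟩
  have hlast : ∀ j ≤ m, a j = a m := by
    have hsum : ∑ j : Fin m, (a j - a m) • μ ^ (j : ℕ) = 0 := calc
      _ = ∑ j ∈ range (m + 1), a j • μ ^ j - a m • ∑ j ∈ range (m + 1), μ ^ j := by
        rw [Fin.sum_univ_eq_sum_range (fun j => (a j - a m) • μ ^ j)]
        simp only [sum_range_succ, smul_add, smul_sum, sub_smul, sum_sub_distrib]
        abel
      _ = 0 := by rw [ha, hμ.geom_sum_eq_zero hn, smul_zero, sub_zero]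
    intro k hk
    rcases hk.lt_or_eq with hk | rfl
    · exact sub_eq_zero.mp (Fintype.linearIndependent_iff.mp hli _ hsum ⟨k, by omega⟩)
    · rfl
  rw [hlast j (by omega), hlast 0 (Nat.zero_le m)]

end IsPrimitiveRoot

section CyclicGroup

variable {H : Type*} [Group H]

theorem sum_eq_sum_range_orderOf_pow {M : Type*} [Fintype H] [AddCommMonoid M] {h₀ : H}
    (hgen : ∀ h, h ∈ Subgroup.zpowers h₀) (f : H → M) :
    ∑ h, f h = ∑ j ∈ range (orderOf h₀), f (h₀ ^ j) := by
  classical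
  rw [← IsCyclic.image_range_orderOf hgen, sum_image fun i hi j hj hij =>
    pow_injOn_Iio_orderOf (Finset.mem_range.mp hi) (Finset.mem_range.mp hj) hij]

theorem IsCyclic.exists_generator_isPrimitiveRoot {M : Type*} [Finite H] [IsCyclic H]
    [CommMonoid M] (χ : H →* M) (hχ : Function.Injective χ) :
    ∃ h₀, (∀ h, h ∈ Subgroup.zpowers h₀) ∧ IsPrimitiveRoot (χ h₀) (Nat.card H) := by
  obtain ⟨h₀, hgen⟩ := IsCyclic.exists_generator (α := H)
  refine ⟨h₀, hgen, ?_⟩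
  rw [← orderOf_eq_card_of_forall_mem_zpowers hgen, ← orderOf_injective χ hχ]
  exact IsPrimitiveRoot.orderOf _

theorem MonoidHom.injective_of_isPrimitiveRoot {M : Type*} [Finite H] [CommMonoid M]
    (χ : H →* M) {h₀ : H} (hgen : ∀ h, h ∈ Subgroup.zpowers h₀)
    (hχ : IsPrimitiveRoot (χ h₀) (Nat.card H)) : Function.Injective χ := by
  classical
  rw [← orderOf_eq_card_of_forall_mem_zpowers hgen] at hχ
  intro g h hgh
  obtain ⟨i, hi, rfl⟩ := mem_image.mp (mem_zpowers_iff_mem_range_orderOf.mp (hgen g))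
  obtain ⟨j, hj, rfl⟩ := mem_image.mp (mem_zpowers_iff_mem_range_orderOf.mp (hgen h))
  simp only [map_pow] at hgh
  rw [hχ.pow_inj (Finset.mem_range.mp hi) (Finset.mem_range.mp hj) hgh]

theorem MonoidHom.eq_const_of_sum_smul_eq_zero {K E : Type*} [Field K] [Field E] [Algebra K E]
    [Fintype H] (χ : H →* E) {h₀ : H} (hgen : ∀ h, h ∈ Subgroup.zpowers h₀)
    (hχ : IsPrimitiveRoot (χ h₀) (Nat.card H)) (hH : 1 < Nat.card H)
    (hli : LinearIndependent K fun j : Fin (Nat.card H - 1) => χ h₀ ^ (j : ℕ)) {a : H → K}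
    (ha : ∑ h, a h • χ h = 0) (h : H) : a h = a 1 := by
  classical
  rw [← orderOf_eq_card_of_forall_mem_zpowers hgen] at hχ hH hli
  rw [sum_eq_sum_range_orderOf_pow hgen] at ha
  simp only [map_pow] at ha
  obtain ⟨j, hj, rfl⟩ := mem_image.mp (mem_zpowers_iff_mem_range_orderOf.mp (hgen h))
  simpa using hχ.coeff_eq_of_sum_smul_pow_eq_zero hH hli ha (Finset.mem_range.mp hj)

end CyclicGroup

theorem add_eq_add_of_sum_mul_eq_zero {E H₁ H₂ : Type*} [Field E] [CharZero E] [Group H₁]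
    [Group H₂] [Fintype H₁] [Fintype H₂] (hH₁ : (Nat.card H₁).Prime) (hH₂ : (Nat.card H₂).Prime)
    (hcop : (Nat.card H₁).Coprime (Nat.card H₂)) (χ₁ : H₁ →* E) (χ₂ : H₂ →* E)
    (hχ₁ : Function.Injective χ₁) (hχ₂ : Function.Injective χ₂) {c : H₁ → H₂ → ℤ}
    (hc : ∑ a, ∑ b, (c a b : E) * (χ₁ a * χ₂ b) = 0) (a : H₁) (b : H₂) :
    c a b + c 1 1 = c a 1 + c 1 b := by
  have := isCyclic_of_prime_card (hp := ⟨hH₁⟩) rfl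
  have := isCyclic_of_prime_card (hp := ⟨hH₂⟩) rfl
  obtain ⟨h₁, hgen₁, hprim₁⟩ := IsCyclic.exists_generator_isPrimitiveRoot χ₁ hχ₁
  obtain ⟨h₂, hgen₂, hprim₂⟩ := IsCyclic.exists_generator_isPrimitiveRoot χ₂ hχ₂
  have hmem : ∀ a, χ₁ a ∈ ℚ⟮χ₁ h₁⟯ := fun a => by
    obtain ⟨k, rfl⟩ := mem_powers_iff_mem_zpowers.mpr (hgen₁ a)
    rw [map_pow]
    exact pow_mem (mem_adjoin_simple_self ℚ _) k
  -- `hc` read as a linear relation among the `χ₂ b` with coefficients in `ℚ⟮χ₁ h₁⟯`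
  let α : H₂ → ℚ⟮χ₁ h₁⟯ := fun b =>
    ⟨∑ a, (c a b : E) * χ₁ a, sum_mem fun a _ => mul_mem (intCast_mem _ _) (hmem a)⟩
  have hα : ∀ b, α b = α 1 := by
    refine χ₂.eq_const_of_sum_smul_eq_zero hgen₂ hprim₂ hH₂.one_lt ?_ ?_
    · rw [← Nat.totient_prime hH₂]
      exact hprim₁.linearIndependent_pow_adjoin hprim₂ hH₁.pos hH₂.pos hcop
    · rw [← hc, sum_comm]
      refine sum_congr rfl fun b _ => ?_
      rw [show α b • χ₂ b = (α b : E) * χ₂ b from smul_eq_mul _ _, sum_mul]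
      simp only [mul_assoc]
  have hcol : ∑ a, ((c a b - c a 1 : ℤ) : ℚ) • χ₁ a = 0 := by
    have hb : (α b : E) = α 1 := congrArg Subtype.val (hα b)
    simp only [α] at hb
    simp [Rat.smul_def, sub_mul, sum_sub_distrib, hb]
  have hrow := χ₁.eq_const_of_sum_smul_eq_zero hgen₁ hprim₁ hH₁.one_lt
    (by rw [← Nat.totient_prime hH₁]; exact hprim₁.linearIndependent_pow_rat hH₁.pos) hcol a
  have hrow' : c a b - c a 1 = c 1 b - c 1 1 := by exact_mod_cast hrow
  omega

theorem exists_nonneg_add_eq_add {α β R : Type*} [Finite β] [Nonempty β] [AddCommGroup R]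
    [LinearOrder R] [IsOrderedAddMonoid R] (f : α → R) (g : β → R) (h : ∀ a b, 0 ≤ f a + g b) :
    ∃ f' : α → R, ∃ g' : β → R, (∀ a, 0 ≤ f' a) ∧ (∀ b, 0 ≤ g' b) ∧
      ∀ a b, f a + g b = f' a + g' b := by
  obtain ⟨b₀, hb₀⟩ := Finite.exists_min g
  exact ⟨fun a => f a + g b₀, fun b => g b - g b₀, fun a => h a b₀,
    fun b => sub_nonneg.mpr (hb₀ b), fun a b => by rw [add_add_sub_cancel]⟩

theorem Subgroup.IsComplement'.sum_eq_sum_sum_mul {G M : Type*} [Group G] [Fintype G]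
    [AddCommMonoid M] {P Q : Subgroup G} [Fintype P] [Fintype Q] (h : P.IsComplement' Q)
    (f : G → M) : ∑ g, f g = ∑ a : P, ∑ b : Q, f (a * b) := by
  rw [← Fintype.sum_prod_type']
  exact (Fintype.sum_bijective _ h (fun x => f (x.1 * x.2)) f fun _ => rfl).symm

namespace MonoidAlgebra

variable {R G : Type*}

theorem coeff_mul_nonneg [Semiring R] [PartialOrder R] [IsOrderedRing R] [Mul G]
    {x y : MonoidAlgebra R G} (hx : ∀ g, 0 ≤ x.coeff g) (hy : ∀ g, 0 ≤ y.coeff g) (g : G) :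
    0 ≤ (x * y).coeff g := by
  classical
  rw [coeff_mul]
  exact sum_nonneg fun a _ => sum_nonneg fun b _ => by
    dsimp only
    split_ifs
    exacts [mul_nonneg (hx a) (hy b), le_rfl]

theorem sum_single_coeff [Semiring R] [Fintype G] (x : MonoidAlgebra R G) :
    ∑ g, single g (x.coeff g) = x :=
  (Finsupp.sum_fintype _ _ fun _ => single_zero _).symm.trans (sum_coeff_single x)

theorem coeff_sum_single_subtype [Semiring R] {p : G → Prop} [DecidablePred p]
    [Fintype (Subtype p)] (r : Subtype p → R) (g : G) :
    (∑ a : Subtype p, single (a : G) (r a)).coeff g = if h : p g then r ⟨g, h⟩ else 0 := by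
  classical
  simp only [coeff_sum, Finsupp.finsetSum_apply, coeff_single, Finsupp.single_apply]
  split_ifs with h
  · rw [Fintype.sum_eq_single ⟨g, h⟩ fun a ha => if_neg fun hag => ha (Subtype.ext hag)]
    simp
  · exact sum_eq_zero fun a _ => if_neg fun (hag : (a : G) = g) => h (hag ▸ a.2)

theorem map_single_eq_mul {S : Type*} [Ring S] [Monoid G] (f : MonoidAlgebra ℤ G →+* S) (g : G)
    (r : ℤ) : f (single g r) = r * f (of ℤ G g) := by
  rw [of_apply, ← zsmul_eq_mul, ← map_zsmul, smul_single, smul_eq_mul, mul_one]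

end MonoidAlgebra

section GroupRing

variable {G : Type*} [CommGroup G]

theorem grpSum_eq_sum_of (H : Subgroup G) [Fintype H] (hs : (H : Set G).Finite) :
    grpSum (H : Set G) hs = ∑ a : H, of ℤ G a :=
  sum_subtype _ (fun _ => hs.mem_toFinset) _

theorem coeff_grpSum_nonneg (H : Subgroup G) (hs : (H : Set G).Finite) (g : G) :
    0 ≤ (grpSum (H : Set G) hs).coeff g := by
  classical
  have : Fintype H := hs.fintype
  rw [grpSum_eq_sum_of]
  simp only [of_apply, coeff_sum_single_subtype]
  split_ifs <;> norm_num

theorem map_grpSum_eq_zero {R : Type*} [CommRing R] [IsDomain R] (φ : MonoidAlgebra ℤ G →+* R)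
    (hφ : Function.Injective ((φ : MonoidAlgebra ℤ G →* R).comp (of ℤ G))) (H : Subgroup G)
    (hH : 1 < Nat.card H) (hs : (H : Set G).Finite) : φ (grpSum (H : Set G) hs) = 0 := by
  classical
  have : Fintype H := hs.fintype
  have := Finite.one_lt_card_iff_nontrivial.mp hH
  obtain ⟨a, ha⟩ := exists_ne (1 : H)
  rw [grpSum_eq_sum_of, map_sum]
  refine sum_hom_units_eq_zero (((φ : MonoidAlgebra ℤ G →* R).comp (of ℤ G)).comp H.subtype) ?_
  intro h1
  exact ha (Subtype.ext (hφ (by simpa [← one_def] using DFunLike.congr_fun h1 a)))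

variable [Fintype G] {P Q : Subgroup G} [Fintype P] [Fintype Q]

theorem sum_single_mul_grpSum_add_sum_single_mul_grpSum (f : P → ℤ) (g : Q → ℤ) :
    (∑ a : P, single (a : G) (f a)) * grpSum (Q : Set G) (Set.toFinite _) +
        (∑ b : Q, single (b : G) (g b)) * grpSum (P : Set G) (Set.toFinite _) =
      ∑ a : P, ∑ b : Q, single (a * b : G) (f a + g b) := by
  rw [grpSum_eq_sum_of, grpSum_eq_sum_of, sum_mul_sum, sum_mul_sum, sum_comm (s := univ (α := Q)),
    ← sum_add_distrib]
  refine sum_congr rfl fun a _ => ?_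
  rw [← sum_add_distrib]
  refine sum_congr rfl fun b _ => ?_
  rw [of_apply, of_apply, single_mul_single, single_mul_single, mul_one, mul_one,
    mul_comm (b : G), single_add]

theorem exists_nonneg_decomposition_of_map_eq_zero {E : Type*} [Field E] [CharZero E]
    (hP : (Nat.card P).Prime) (hQ : (Nat.card Q).Prime) (hcop : (Nat.card P).Coprime (Nat.card Q))
    (hPQ : P.IsComplement' Q) (φ : MonoidAlgebra ℤ G →+* E)
    (hφ : Function.Injective ((φ : MonoidAlgebra ℤ G →* E).comp (of ℤ G)))
    {x : MonoidAlgebra ℤ G} (hx : ∀ g, 0 ≤ x.coeff g) (hφx : φ x = 0) :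
    ∃ u v : MonoidAlgebra ℤ G,
      (∀ g, 0 ≤ u.coeff g) ∧ (∀ g ∉ P, u.coeff g = 0) ∧
      (∀ g, 0 ≤ v.coeff g) ∧ (∀ g ∉ Q, v.coeff g = 0) ∧
      x = u * grpSum (Q : Set G) (Set.toFinite _) + v * grpSum (P : Set G) (Set.toFinite _) := by
  classical
  set χ := (φ : MonoidAlgebra ℤ G →* E).comp (of ℤ G)
  set c : P → Q → ℤ := fun a b => x.coeff (a * b)
  have hx_eq : x = ∑ a : P, ∑ b : Q, single (a * b : G) (c a b) := by
    rw [← hPQ.sum_eq_sum_sum_mul fun g => single g (x.coeff g), sum_single_coeff]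
  have hrel := add_eq_add_of_sum_mul_eq_zero hP hQ hcop (χ.comp P.subtype) (χ.comp Q.subtype)
    (hφ.comp Subtype.val_injective) (hφ.comp Subtype.val_injective) (c := c) (by
      rw [← hφx, hx_eq]
      simp only [map_sum, map_single_eq_mul, map_mul, χ, MonoidHom.comp_apply,
        Subgroup.coe_subtype, MonoidHom.coe_coe])
  obtain ⟨f, g, hf, hg, hfg⟩ := exists_nonneg_add_eq_add (fun a => c a 1 - c 1 1) (fun b => c 1 b)
    fun a b => by linarith [hx (a * b), hrel a b]
  refine ⟨∑ a : P, single (a : G) (f a), ∑ b : Q, single (b : G) (g b), fun h => ?_,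
    fun h hh => ?_, fun h => ?_, fun h hh => ?_, ?_⟩
  · rw [coeff_sum_single_subtype]; split_ifs; exacts [hf _, le_rfl]
  · rw [coeff_sum_single_subtype, dif_neg hh]
  · rw [coeff_sum_single_subtype]; split_ifs; exacts [hg _, le_rfl]
  · rw [coeff_sum_single_subtype, dif_neg hh]
  · rw [sum_single_mul_grpSum_add_sum_single_mul_grpSum, hx_eq]
    refine sum_congr rfl fun a _ => sum_congr rfl fun b _ => ?_
    rw [← hfg]
    congr 1
    linarith [hrel a b]

end GroupRing

/-- Theorem 3.3(2): for `G` cyclic of order `m = p·q` (`p ≠ q` primes), with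
`P, Q` the unique subgroups of orders `p, q`, one has
`ℕG ∩ ker φ = ℕ[P]·σ(Q) + ℕ[Q]·σ(P)`, where `ℕ[P]` is the set of elements of
`ℤG` supported on `P` with non-negative coefficients (similarly `ℕ[Q]`). -/
theorem NG_inter_ker_two_primes
    (p q : ℕ) (hp : p.Prime) (hq : q.Prime) (hpq : p ≠ q)
    (G : Type) [CommGroup G] [Fintype G] (hcard : Fintype.card G = p * q)
    (z : G) (hz : ∀ g : G, g ∈ Subgroup.zpowers z)
    (ζ : ℂ) (hζ : IsPrimitiveRoot ζ (p * q))
    (φ : MonoidAlgebra ℤ G →+* ℂ) (hφ : φ (MonoidAlgebra.of ℤ G z) = ζ)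
    (P Q : Subgroup G) (hP : Nat.card P = p) (hQ : Nat.card Q = q) :
    {x : MonoidAlgebra ℤ G | (∀ g, 0 ≤ x.coeff g) ∧ φ x = 0} =
      {x : MonoidAlgebra ℤ G | ∃ u v : MonoidAlgebra ℤ G,
        (∀ g, 0 ≤ u.coeff g) ∧ (∀ g ∉ P, u.coeff g = 0) ∧
        (∀ g, 0 ≤ v.coeff g) ∧ (∀ g ∉ Q, v.coeff g = 0) ∧
        x = u * grpSum (Q : Set G) (Set.toFinite _) +
            v * grpSum (P : Set G) (Set.toFinite _)} := by
  classical
  have hcop : (Nat.card P).Coprime (Nat.card Q) := by rwa [hP, hQ, Nat.coprime_primes hp hq]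
  have hcardG : Nat.card G = p * q := by rw [Nat.card_eq_fintype_card, hcard]
  have hχ : Function.Injective ((φ : MonoidAlgebra ℤ G →* ℂ).comp (of ℤ G)) :=
    MonoidHom.injective_of_isPrimitiveRoot _ hz
      (by rwa [hcardG, MonoidHom.comp_apply, MonoidHom.coe_coe, hφ])
  have hPQ : P.IsComplement' Q := Subgroup.isComplement'_of_coprime (by rw [hP, hQ, hcardG]) hcop
  ext x
  constructor
  · rintro ⟨hx, hφx⟩
    exact exists_nonneg_decomposition_of_map_eq_zero (hP ▸ hp) (hQ ▸ hq) hcop hPQ φ hχ hx hφx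
  · rintro ⟨u, v, hu, -, hv, -, rfl⟩
    refine ⟨fun g => add_nonneg (coeff_mul_nonneg hu (coeff_grpSum_nonneg Q _) g)
      (coeff_mul_nonneg hv (coeff_grpSum_nonneg P _) g), ?_⟩
    rw [map_add, map_mul, map_mul, map_grpSum_eq_zero φ hχ Q (hQ ▸ hq.one_lt),
      map_grpSum_eq_zero φ hχ P (hP ▸ hp.one_lt), mul_zero, mul_zero, add_zero]

end
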